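/- The elements x_-hat = V - V*, y-hat = W - W*, z-hat = VW* - V*W generate the (-1)-eigenspace O(T^2_\theta)_- of the involution \sigma (V \mapsto V*, W \mapsto W*) as a left module over the fixed-point subalgebra O(P_\theta) = O(T^2_\theta)_+. -/

import Mathlib

/-!
For `m n : ℤ` put `F m n = V ^ m * W ^ n - V ^ (-m) * W ^ (-n)`; the two families of the
statement are `F m n` and `F m (-n)`. Left multiplication by `x = V + V⁻¹` gives
`x * F m n = F (m + 1) n + F (m - 1) n`, and the twisted commutation
`W * V ^ m = λ ^ (-m) • (V ^ m * W)` gives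
`y * F m n = λ ^ (-m) • F m (n + 1) + λ ^ m • F m (n - 1)`. Both three-term recurrences can be
run in either direction, so a left `O(P_θ)`-submodule contains every `F m n` as soon as it
contains `F 0 0 = 0`, `F 0 1 = ŷ`, `F 1 0 = x̂` and `F 1 1 = x * ŷ + ẑ`.
-/

theorem Submodule.mem_of_recurrence {R M : Type*} [Ring R] [AddCommGroup M] [Module R M]
    {N : Submodule R M} {F : ℤ → M} {r α β : R} (hα : IsUnit α) (hβ : IsUnit β)
    (hF : ∀ k, r • F k = α • F (k + 1) + β • F (k - 1)) (h₀ : F 0 ∈ N) (h₁ : F 1 ∈ N)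
    (k : ℤ) : F k ∈ N := by
  suffices ∀ k, F k ∈ N ∧ F (k + 1) ∈ N from (this k).1
  intro k
  induction k using Int.induction_on with
  | zero => exact ⟨h₀, by simpa using h₁⟩
  | succ k ih =>
    refine ⟨ih.2, ?_⟩
    have hup : α • F (k + 1 + 1) = r • F (k + 1) - β • F k := by simp [hF]
    rw [← N.smul_mem_iff_of_isUnit hα, hup]
    exact sub_mem (N.smul_mem r ih.2) (N.smul_mem β ih.1)
  | pred k ih =>
    refine ⟨?_, by simpa using ih.1⟩
    have hdown : β • F (-k - 1) = r • F (-k) - α • F (-k + 1) := by simp [hF]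
    rw [← N.smul_mem_iff_of_isUnit hβ, hdown]
    exact sub_mem (N.smul_mem r ih.1) (N.smul_mem α ih.2)

theorem Subalgebra.mem_span_triple {R A : Type*} [CommSemiring R] [Semiring A] [Algebra R A]
    {S : Subalgebra R A} {w x y z : A} :
    w ∈ Submodule.span S ({x, y, z} : Set A) ↔
      ∃ p q r : A, p ∈ S ∧ q ∈ S ∧ r ∈ S ∧ w = p * x + q * y + r * z := by
  rw [Submodule.mem_span_triple]
  constructor
  · rintro ⟨p, q, r, rfl⟩
    exact ⟨p, q, r, p.2, q.2, r.2, rfl⟩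
  · rintro ⟨p, q, r, hp, hq, hr, rfl⟩
    exact ⟨⟨p, hp⟩, ⟨q, hq⟩, ⟨r, hr⟩, rfl⟩

section

variable {K A : Type*} [Field K] [Ring A] [Algebra K A]

def QCommute (c : K) (a b : A) : Prop := a * b = c • (b * a)

namespace QCommute

variable {c d : K}

theorem symm {a b : A} (hc : c ≠ 0) (h : QCommute c a b) : QCommute c⁻¹ b a := by
  rw [QCommute, h, inv_smul_smul₀ hc]

theorem mul_left {a a' b : A} (h : QCommute c a b) (h' : QCommute d a' b) :
    QCommute (c * d) (a * a') b := by
  rw [QCommute, mul_assoc, h', mul_smul_comm, ← mul_assoc, h, smul_mul_assoc, smul_smul,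
    mul_comm d, mul_assoc]

theorem units_inv_left {a : Aˣ} {b : A} (hc : c ≠ 0) (h : QCommute c (a : A) b) :
    QCommute c⁻¹ (↑a⁻¹ : A) b :=
  calc (↑a⁻¹ : A) * b = ↑a⁻¹ * (b * a) * ↑a⁻¹ := by simp [mul_assoc]
    _ = c⁻¹ • (b * ↑a⁻¹) := by
      rw [h.symm hc, mul_smul_comm, smul_mul_assoc]; simp [← mul_assoc]

theorem units_inv_right {a : A} {b : Aˣ} (hc : c ≠ 0) (h : QCommute c a b) :
    QCommute c⁻¹ a (↑b⁻¹ : A) := by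
  simpa using ((h.symm hc).units_inv_left (inv_ne_zero hc)).symm (inv_ne_zero (inv_ne_zero hc))

theorem units_zpow_left {a : Aˣ} {b : A} (hc : c ≠ 0) (h : QCommute c (a : A) b) (j : ℤ) :
    QCommute (c ^ j) (↑(a ^ j) : A) b := by
  induction j using Int.induction_on with
  | zero => simp [QCommute]
  | succ j ih =>
    rw [zpow_add_one, zpow_add_one₀ hc, Units.val_mul]
    exact ih.mul_left h
  | pred j ih =>
    rw [zpow_sub_one, zpow_sub_one₀ hc, Units.val_mul]
    exact ih.mul_left (h.units_inv_left hc)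

end QCommute

def oddMonomial (u v : Aˣ) (m n : ℤ) : A := ↑(u ^ m * v ^ n) - ↑(u ^ (-m) * v ^ (-n))

theorem add_inv_mul_oddMonomial (u v : Aˣ) (m n : ℤ) :
    (↑u + ↑u⁻¹) * oddMonomial u v m n
      = oddMonomial u v (m + 1) n + oddMonomial u v (m - 1) n := by
  have h₁ : u * (u ^ m * v ^ n) = u ^ (m + 1) * v ^ n := by group
  have h₂ : u⁻¹ * (u ^ m * v ^ n) = u ^ (m - 1) * v ^ n := by group
  have h₃ : u * (u ^ (-m) * v ^ (-n)) = u ^ (-(m - 1)) * v ^ (-n) := by group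
  have h₄ : u⁻¹ * (u ^ (-m) * v ^ (-n)) = u ^ (-(m + 1)) * v ^ (-n) := by group
  simp only [oddMonomial, add_mul, mul_sub, ← Units.val_mul, h₁, h₂, h₃, h₄]
  abel

theorem add_inv_mul_oddMonomial_of_qCommute {c : K} {u v : Aˣ} (hc : c ≠ 0)
    (h : QCommute c (u : A) v) (m n : ℤ) :
    (↑v + ↑v⁻¹) * oddMonomial u v m n
      = (c ^ m)⁻¹ • oddMonomial u v m (n + 1) + c ^ m • oddMonomial u v m (n - 1) := by
  have hv (j : ℤ) : (v : A) * ↑(u ^ j) = (c ^ j)⁻¹ • (↑(u ^ j) * ↑v) :=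
    (h.units_zpow_left hc j).symm (zpow_ne_zero j hc)
  have hv' (j : ℤ) : (↑v⁻¹ : A) * ↑(u ^ j) = c ^ j • (↑(u ^ j) * ↑v⁻¹) := by
    have hc' : c⁻¹ ≠ 0 := inv_ne_zero hc
    simpa [QCommute] using
      ((h.units_inv_right hc).units_zpow_left hc' j).symm (zpow_ne_zero j hc')
  have e₁ (j k : ℤ) : (v : A) * ↑(u ^ j * v ^ k) = (c ^ j)⁻¹ • ↑(u ^ j * v ^ (k + 1)) := by
    rw [Units.val_mul, ← mul_assoc, hv, smul_mul_assoc, mul_assoc, ← Units.val_mul,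
      ← zpow_one_add, add_comm, Units.val_mul]
  have e₂ (j k : ℤ) : (↑v⁻¹ : A) * ↑(u ^ j * v ^ k) = c ^ j • ↑(u ^ j * v ^ (k - 1)) := by
    rw [Units.val_mul, ← mul_assoc, hv', smul_mul_assoc, mul_assoc, ← Units.val_mul,
      ← zpow_neg_one, ← zpow_add, neg_add_eq_sub, Units.val_mul]
  rw [oddMonomial, add_mul, mul_sub, mul_sub, e₁, e₁, e₂, e₂, show -n + 1 = -(n - 1) by ring,
    show -n - 1 = -(n + 1) by ring, zpow_neg, inv_inv, oddMonomial, oddMonomial, smul_sub,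
    smul_sub]
  abel

theorem oddMonomial_mem_span {c : K} {u v : Aˣ} (hc : c ≠ 0) (h : QCommute c (u : A) v)
    (m n : ℤ) :
    oddMonomial u v m n ∈ Submodule.span (Algebra.adjoin K {(u : A) + ↑u⁻¹, (v : A) + ↑v⁻¹})
      {(u : A) - ↑u⁻¹, (v : A) - ↑v⁻¹, (u : A) * ↑v⁻¹ - ↑u⁻¹ * ↑v} := by
  set P := Algebra.adjoin K {(u : A) + ↑u⁻¹, (v : A) + ↑v⁻¹}
  set N := Submodule.span P {(u : A) - ↑u⁻¹, (v : A) - ↑v⁻¹, (u : A) * ↑v⁻¹ - ↑u⁻¹ * ↑v}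
  have hx : (u : A) + ↑u⁻¹ ∈ P := Algebra.subset_adjoin (by simp)
  have hy : (v : A) + ↑v⁻¹ ∈ P := Algebra.subset_adjoin (by simp)
  have hunit (m : ℤ) : IsUnit (algebraMap K P (c ^ m)) := (zpow_ne_zero m hc).isUnit.map _
  have hcol (m : ℤ) (h₀ : oddMonomial u v m 0 ∈ N) (h₁ : oddMonomial u v m 1 ∈ N) (n : ℤ) :
      oddMonomial u v m n ∈ N :=
    Submodule.mem_of_recurrence (r := ⟨_, hy⟩) (hunit (-m)) (hunit m) (fun n => by
      simpa [algebraMap_smul, Subalgebra.smul_def] using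
        add_inv_mul_oddMonomial_of_qCommute hc h m n) h₀ h₁ n
  have hrow (n : ℤ) (h₀ : oddMonomial u v 0 n ∈ N) (h₁ : oddMonomial u v 1 n ∈ N) (m : ℤ) :
      oddMonomial u v m n ∈ N :=
    Submodule.mem_of_recurrence (F := fun m => oddMonomial u v m n) (r := ⟨_, hx⟩)
      isUnit_one isUnit_one (fun m => by
        simpa [Subalgebra.smul_def] using add_inv_mul_oddMonomial u v m n) h₀ h₁ m
  have h₁₁ : oddMonomial u v 1 1
      = (⟨_, hx⟩ : P) • ((v : A) - ↑v⁻¹) + ((u : A) * ↑v⁻¹ - ↑u⁻¹ * ↑v) := by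
    simp only [oddMonomial, Subalgebra.smul_def, smul_eq_mul, zpow_one, zpow_neg, Units.val_mul]
    noncomm_ring
  refine hrow n (hcol 0 ?_ ?_ n) (hcol 1 ?_ ?_ n) m
  · simp [oddMonomial]
  · exact Submodule.subset_span (by simp [oddMonomial])
  · exact Submodule.subset_span (by simp [oddMonomial])
  · rw [h₁₁]
    exact add_mem (Submodule.smul_mem _ _ (Submodule.subset_span (by simp)))
      (Submodule.subset_span (by simp))

theorem oddMonomial_natCast (u v : Aˣ) (m n : ℕ) :
    oddMonomial u v m n = ↑u ^ m * ↑v ^ n - ↑u⁻¹ ^ m * ↑v⁻¹ ^ n := by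
  simp [oddMonomial, Units.val_pow_eq_pow_val]

theorem oddMonomial_natCast_neg (u v : Aˣ) (m n : ℕ) :
    oddMonomial u v m (-n) = ↑u ^ m * ↑v⁻¹ ^ n - ↑u⁻¹ ^ m * ↑v ^ n := by
  simp [oddMonomial, Units.val_pow_eq_pow_val]

end

/-- the elements `x̂ = V-V*`, `ŷ = W-W*`, `ẑ = VW* - V*W`
generate the odd part `O(T²_θ)₋` (spanned by `VᵐWⁿ - V*ᵐW*ⁿ` and
`VᵐW*ⁿ - V*ᵐWⁿ`, `m+n > 0`) as a left module over the pillow algebra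
`O(P_θ)`, the subalgebra generated by `x = V+V*` and `y = W+W*`. -/
theorem ncTorus_odd_part_generation (A : Type*) [Ring A] [Algebra ℂ A] (θ : ℝ) (lam : ℂ)
    (hlam : lam = Complex.exp (2 * Real.pi * θ * Complex.I))
    (V Vs W Ws : A)
    (hVVs : V * Vs = 1) (hVsV : Vs * V = 1)
    (hWWs : W * Ws = 1) (hWsW : Ws * W = 1)
    (hcomm : V * W = lam • (W * V)) :
    ∀ m n : ℕ, 0 < m + n →
      (∃ p q r : A,
        p ∈ Algebra.adjoin ℂ ({V + Vs, W + Ws} : Set A) ∧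
        q ∈ Algebra.adjoin ℂ ({V + Vs, W + Ws} : Set A) ∧
        r ∈ Algebra.adjoin ℂ ({V + Vs, W + Ws} : Set A) ∧
        V ^ m * W ^ n - Vs ^ m * Ws ^ n
          = p * (V - Vs) + q * (W - Ws) + r * (V * Ws - Vs * W)) ∧
      (∃ p q r : A,
        p ∈ Algebra.adjoin ℂ ({V + Vs, W + Ws} : Set A) ∧
        q ∈ Algebra.adjoin ℂ ({V + Vs, W + Ws} : Set A) ∧
        r ∈ Algebra.adjoin ℂ ({V + Vs, W + Ws} : Set A) ∧
        V ^ m * Ws ^ n - Vs ^ m * W ^ n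
          = p * (V - Vs) + q * (W - Ws) + r * (V * Ws - Vs * W)) := by
  intro m n _
  let u : Aˣ := ⟨V, Vs, hVVs, hVsV⟩
  let v : Aˣ := ⟨W, Ws, hWWs, hWsW⟩
  have hlam0 : lam ≠ 0 := hlam ▸ Complex.exp_ne_zero _
  have hmem := oddMonomial_mem_span (u := u) (v := v) hlam0 hcomm
  exact ⟨Subalgebra.mem_span_triple.mp (oddMonomial_natCast u v m n ▸ hmem m n),
    Subalgebra.mem_span_triple.mp (oddMonomial_natCast_neg u v m n ▸ hmem m (-n))⟩
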